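/- arXiv:2603.02822 — 3 statements merged into one kernel-verified Lean document; each statement's English description precedes it below -/
import Mathlib

section
/- If T is a near-isometry on a Hilbert space H and M is a closed subspace reducing T (i.e., M and its orthogonal complement are both invariant under T), then the restriction of T to M is a near-isometry on M. -/
open ContinuousLinearMap

/-!
The restriction `S` of `T` to a reducing subspace `M` satisfies `↑(S x) = T x`, and since `Mᗮ` is
`T`-invariant, `T*` preserves `M` and restricts to `S*`. Hence the norm bounds pass to `S`, and
`S*ⁿ Sⁿ⁺¹ x` is `T*ⁿ Tⁿ⁺¹ x = T y` viewed in `M`. As `T` commutes with the orthogonal projection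
`P` onto `M`, `T y = P (T y) = T (P y)` with `P y ∈ M`.
-/

/-- A bounded operator `T` on a complex Hilbert space is a *near-isometry* if
(i) there is `δ > 0` with `δ‖x‖ ≤ ‖Tx‖ ≤ ‖x‖` for all `x`, and
(ii) for each `n ≥ 0`, `T*ⁿ Tⁿ⁺¹ H ⊆ T H`. -/
def IsNearIsometry {H : Type*} [NormedAddCommGroup H] [InnerProductSpace ℂ H]
    [CompleteSpace H] (T : H →L[ℂ] H) : Prop :=
  (∃ δ > (0 : ℝ), ∀ x : H, δ * ‖x‖ ≤ ‖T x‖ ∧ ‖T x‖ ≤ ‖x‖) ∧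
  ∀ n : ℕ, ∀ x : H, ∃ y : H, ((adjoint T) ^ n) ((T ^ (n + 1)) x) = T y

open Function

theorem Function.Semiconj.continuousLinearMap_pow {R F G : Type*} [Semiring R]
    [TopologicalSpace F] [AddCommMonoid F] [Module R F]
    [TopologicalSpace G] [AddCommMonoid G] [Module R G]
    {f : F → G} {S : F →L[R] F} {T : G →L[R] G}
    (h : Semiconj f S T) (n : ℕ) : Semiconj f ⇑(S ^ n) ⇑(T ^ n) := by
  simpa only [FunLike.coe_pow_eq_iterate] using h.iterate_right n

namespace ContinuousLinearMap

variable {𝕜 E : Type*} [RCLike 𝕜] [NormedAddCommGroup E] [InnerProductSpace 𝕜 E]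

theorem starProjection_apply_comm_of_reduces {T : E →L[𝕜] E} {M : Submodule 𝕜 E}
    [M.HasOrthogonalProjection] (hM : ∀ x ∈ M, T x ∈ M) (hM' : ∀ x ∈ Mᗮ, T x ∈ Mᗮ) (y : E) :
    M.starProjection (T y) = T (M.starProjection y) := by
  have hsplit : T y = T (M.starProjection y) + T (y - M.starProjection y) := by
    rw [← map_add, add_sub_cancel]
  rw [hsplit, map_add,
    Submodule.starProjection_eq_self_iff.mpr (hM _ (M.starProjection_apply_mem y)),
    (M.starProjection_apply_eq_zero_iff).mpr
      (hM' _ (M.sub_starProjection_mem_orthogonal y)), add_zero]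

variable [CompleteSpace E]

theorem semiconj_subtype_adjoint {T : E →L[𝕜] E} {M : Submodule 𝕜 E} [CompleteSpace M]
    (hM' : ∀ x ∈ Mᗮ, T x ∈ Mᗮ) {S : M →L[𝕜] M} (hS : Semiconj (↑) S T) :
    Semiconj ((↑) : M → E) (adjoint S) (adjoint T) := by
  intro x
  have hTx : adjoint T x ∈ M :=
    (mem_invtSubmodule_adjoint_iff.mpr
      ((Module.End.mem_invtSubmodule_iff_forall_mem_of_mem _).mpr hM')) x.2
  suffices adjoint S x = ⟨adjoint T x, hTx⟩ from congrArg Subtype.val this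
  refine ext_inner_right 𝕜 fun y => ?_
  rw [adjoint_inner_left, Submodule.coe_inner, hS, Submodule.coe_inner, ← adjoint_inner_left]

end ContinuousLinearMap

theorem stmt0 {H : Type*} [NormedAddCommGroup H] [InnerProductSpace ℂ H] [CompleteSpace H]
    (T : H →L[ℂ] H) (hT : IsNearIsometry T)
    (M : Submodule ℂ H) [CompleteSpace M]
    (hM : ∀ x ∈ M, T x ∈ M) (hM' : ∀ x ∈ Mᗮ, T x ∈ Mᗮ)
    (S : M →L[ℂ] M) (hS : ∀ x : M, (S x : H) = T x) :
    IsNearIsometry S := by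
  obtain ⟨⟨δ, hδ, hbound⟩, hrange⟩ := hT
  have hST : Semiconj ((↑) : M → H) S T := hS
  refine ⟨⟨δ, hδ, fun x => by simpa only [Submodule.coe_norm, hS] using hbound x⟩, fun n x => ?_⟩
  obtain ⟨y, hy⟩ := hrange n x
  have hlift : ((adjoint S ^ n) ((S ^ (n + 1)) x) : H) = T y := by
    rw [(semiconj_subtype_adjoint hM' hST).continuousLinearMap_pow n,
      (hST.continuousLinearMap_pow (n + 1)).eq, hy]
  refine ⟨M.orthogonalProjectionOnto y, Subtype.ext ?_⟩
  rw [hlift, hS, ← Submodule.starProjection_apply, ← starProjection_apply_comm_of_reduces hM hM',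
    Submodule.starProjection_eq_self_iff.mpr (hlift ▸ Submodule.coe_mem _)]
end

section
/- Let T be a bounded operator on a Hilbert space H. Condition T*^n T^(n+1) H ⊆ T H for all n ≥ 0 is equivalent to the condition T^n(ker T*) ⊥ T^(n+1) H for all n ≥ 0, provided T is bounded below (so that T H is closed). -/
open ContinuousLinearMap
open scoped InnerProduct

/-!
Since `T` is bounded below, its range is closed, so `T H = (ker T*)ᗮ`. Hence `T*ⁿ Tⁿ⁺¹ x ∈ T H`
exactly when `⟪v, T*ⁿ Tⁿ⁺¹ x⟫ = ⟪Tⁿ v, Tⁿ⁺¹ x⟫` vanishes for every `v ∈ ker T*`.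
-/

namespace ContinuousLinearMap

theorem antilipschitzWith_of_mul_norm_le {𝕜 E F : Type*} [NontriviallyNormedField 𝕜]
    [SeminormedAddCommGroup E] [NormedSpace 𝕜 E] [SeminormedAddCommGroup F] [NormedSpace 𝕜 F]
    (T : E →L[𝕜] F) {δ : ℝ} (hδ : 0 < δ) (hT : ∀ x, δ * ‖x‖ ≤ ‖T x‖) :
    AntilipschitzWith ⟨δ⁻¹, (inv_pos.2 hδ).le⟩ T :=
  T.antilipschitz_of_bound fun x => by
    change ‖x‖ ≤ δ⁻¹ * ‖T x‖
    rw [inv_mul_eq_div, le_div_iff₀ hδ, mul_comm]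
    exact hT x

variable {𝕜 E F : Type*} [RCLike 𝕜]
  [NormedAddCommGroup E] [InnerProductSpace 𝕜 E] [CompleteSpace E]
  [NormedAddCommGroup F] [InnerProductSpace 𝕜 F] [CompleteSpace F]

theorem range_eq_orthogonal_ker_adjoint_of_antilipschitz (T : E →L[𝕜] F) {c : NNReal}
    (hT : AntilipschitzWith c T) : T.range = T†.kerᗮ := by
  rw [← orthogonal_range, Submodule.orthogonal_orthogonal_eq_closure,
    closed_range_of_antilipschitz hT]

theorem mem_range_iff_inner_eq_zero_of_antilipschitz (T : E →L[𝕜] F) {c : NNReal}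
    (hT : AntilipschitzWith c T) (y : F) :
    y ∈ T.range ↔ ∀ v ∈ T†.ker, inner 𝕜 v y = 0 := by
  rw [range_eq_orthogonal_ker_adjoint_of_antilipschitz T hT, Submodule.mem_orthogonal]

theorem adjoint_pow (T : E →L[𝕜] E) (n : ℕ) : (T ^ n)† = T† ^ n := by
  rw [← star_eq_adjoint, ← star_eq_adjoint, star_pow]

end ContinuousLinearMap

/-- For a bounded-below operator `T` on a Hilbert space, the condition
`T*ⁿ Tⁿ⁺¹ H ⊆ T H` for all `n ≥ 0` is equivalent to the condition
`Tⁿ(ker T*) ⊥ Tⁿ⁺¹ H` for all `n ≥ 0`. -/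
theorem stmt1 {H : Type*} [NormedAddCommGroup H] [InnerProductSpace ℂ H] [CompleteSpace H]
    (T : H →L[ℂ] H) (δ : ℝ) (hδ : 0 < δ) (hlow : ∀ x : H, δ * ‖x‖ ≤ ‖T x‖) :
    (∀ n : ℕ, ∀ x : H, ∃ y : H, ((adjoint T) ^ n) ((T ^ (n + 1)) x) = T y) ↔
    (∀ n : ℕ, ∀ x ∈ LinearMap.ker (adjoint T : H →ₗ[ℂ] H), ∀ y : H,
      (inner ℂ ((T ^ n) x) ((T ^ (n + 1)) y) : ℂ) = 0) := by
  have hT := T.antilipschitzWith_of_mul_norm_le hδ hlow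
  have key : ∀ n x, (∃ y, (T† ^ n) ((T ^ (n + 1)) x) = T y) ↔
      ∀ v ∈ T†.ker, inner ℂ ((T ^ n) v) ((T ^ (n + 1)) x) = 0 := by
    intro n x
    simp_rw [← adjoint_inner_right, adjoint_pow, eq_comm (a := (T† ^ n) _)]
    exact T.mem_range_iff_inner_eq_zero_of_antilipschitz hT _
  simp only [key]
  exact ⟨fun h n v hv x => h n x v hv, fun h n x v hv => h n v hv x⟩
end

section
/- The multiplication operator M_z by the coordinate function z on the Bergman space over the unit disc is a near-isometry: it is a bounded-below contraction and for every n ≥ 0, M_z^n applied to ker(M_z^*) is orthogonal to M_z^(n+1) applied to the Bergman space. -/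
/-!
In the orthonormal basis `eₙ = √(n+1) zⁿ`, `M_z` is the weighted shift `eₙ ↦ wₙ eₙ₊₁` with
weights `wₙ = √((n+1)/(n+2)) ∈ [1/2, 1]`, so Parseval's identity makes it a bounded-below
contraction. As no weight vanishes, `ker M_z*` is spanned by `e₀`, hence `M_zⁿ (ker M_z*)` is
spanned by `eₙ`, while the range of `M_z^(n+1)` is orthogonal to `e₀, …, eₙ`.
-/

open ContinuousLinearMap

section HilbertBasis

variable {ι 𝕜 E : Type*} [RCLike 𝕜] [NormedAddCommGroup E] [InnerProductSpace 𝕜 E]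

theorem HilbertBasis.ext_inner (b : HilbertBasis ι 𝕜 E) {x y : E}
    (h : ∀ i, (inner 𝕜 (b i) x : 𝕜) = inner 𝕜 (b i) y) : x = y := by
  have hx := b.hasSum_repr x
  simp only [b.repr_apply_apply, h] at hx
  exact hx.unique (by simpa only [b.repr_apply_apply] using b.hasSum_repr y)

theorem HilbertBasis.hasSum_norm_inner_sq (b : HilbertBasis ι 𝕜 E) (x : E) :
    HasSum (fun i => ‖(inner 𝕜 (b i) x : 𝕜)‖ ^ 2) (‖x‖ ^ 2) := by
  have h := (b.hasSum_inner_mul_inner x x).mapL (RCLike.reCLM : 𝕜 →L[ℝ] ℝ)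
  have hterm (i : ι) :
      RCLike.re (inner 𝕜 x (b i) * inner 𝕜 (b i) x) = ‖(inner 𝕜 (b i) x : 𝕜)‖ ^ 2 := by
    rw [← inner_conj_symm, RCLike.conj_mul, ← RCLike.ofReal_pow, RCLike.ofReal_re]
  simpa only [RCLike.reCLM_apply, inner_self_eq_norm_sq, hterm] using h

end HilbertBasis

def IsWeightedShift {𝕜 E : Type*} [RCLike 𝕜] [NormedAddCommGroup E] [InnerProductSpace 𝕜 E]
    (e : HilbertBasis ℕ 𝕜 E) (w : ℕ → 𝕜) (T : E →L[𝕜] E) : Prop :=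
  ∀ n, T (e n) = w n • e (n + 1)

namespace IsWeightedShift

variable {𝕜 E : Type*} [RCLike 𝕜] [NormedAddCommGroup E] [InnerProductSpace 𝕜 E]
  {e : HilbertBasis ℕ 𝕜 E} {w : ℕ → 𝕜} {T : E →L[𝕜] E}

theorem pow_apply_zero (hT : IsWeightedShift e w T) (m : ℕ) :
    (T ^ m) (e 0) = (∏ k ∈ Finset.range m, w k) • e m := by
  induction m with
  | zero => simp
  | succ m ih =>
    rw [pow_succ', mul_apply_eq_comp, ih, map_smul, hT, smul_smul, Finset.prod_range_succ]

section Complete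

variable [CompleteSpace E]

theorem adjoint_apply_zero (hT : IsWeightedShift e w T) : adjoint T (e 0) = 0 := by
  refine e.ext_inner fun i => ?_
  rw [adjoint_inner_right, hT, inner_smul_left, orthonormal_iff_ite.mp e.orthonormal]
  simp

theorem adjoint_apply_succ (hT : IsWeightedShift e w T) (k : ℕ) :
    adjoint T (e (k + 1)) = starRingEnd 𝕜 (w k) • e k := by
  refine e.ext_inner fun i => ?_
  rw [adjoint_inner_right, hT, inner_smul_left, inner_smul_right,
    orthonormal_iff_ite.mp e.orthonormal, orthonormal_iff_ite.mp e.orthonormal]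
  rcases eq_or_ne i k with rfl | hik
  · simp
  · simp [hik]

theorem inner_basis_zero_apply (hT : IsWeightedShift e w T) (x : E) :
    (inner 𝕜 (e 0) (T x) : 𝕜) = 0 := by
  rw [← adjoint_inner_left, hT.adjoint_apply_zero, inner_zero_left]

theorem inner_basis_succ_apply (hT : IsWeightedShift e w T) (k : ℕ) (x : E) :
    (inner 𝕜 (e (k + 1)) (T x) : 𝕜) = w k * inner 𝕜 (e k) x := by
  rw [← adjoint_inner_left, hT.adjoint_apply_succ, inner_smul_left, RCLike.conj_conj]

theorem hasSum_norm_sq (hT : IsWeightedShift e w T) (x : E) :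
    HasSum (fun k => ‖w k‖ ^ 2 * ‖(inner 𝕜 (e k) x : 𝕜)‖ ^ 2) (‖T x‖ ^ 2) := by
  have h := e.hasSum_norm_inner_sq (T x)
  rw [← hasSum_nat_add_iff' 1] at h
  simpa [hT.inner_basis_zero_apply, hT.inner_basis_succ_apply, mul_pow] using h

theorem norm_apply_le {b : ℝ} (hT : IsWeightedShift e w T) (hb : ∀ k, ‖w k‖ ≤ b) (x : E) :
    ‖T x‖ ≤ b * ‖x‖ := by
  have hb0 : 0 ≤ b := (norm_nonneg _).trans (hb 0)
  refine (pow_le_pow_iff_left₀ (norm_nonneg _) (by positivity) two_ne_zero).mp ?_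
  rw [mul_pow]
  refine hasSum_le (fun k => ?_) (hT.hasSum_norm_sq x) ((e.hasSum_norm_inner_sq x).mul_left _)
  gcongr
  exact hb k

theorem le_norm_apply {a : ℝ} (hT : IsWeightedShift e w T) (ha0 : 0 ≤ a)
    (ha : ∀ k, a ≤ ‖w k‖) (x : E) : a * ‖x‖ ≤ ‖T x‖ := by
  refine (pow_le_pow_iff_left₀ (by positivity) (norm_nonneg _) two_ne_zero).mp ?_
  rw [mul_pow]
  refine hasSum_le (fun k => ?_) ((e.hasSum_norm_inner_sq x).mul_left _) (hT.hasSum_norm_sq x)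
  gcongr
  exact ha k

theorem eq_smul_of_adjoint_apply_eq_zero (hT : IsWeightedShift e w T) (hw : ∀ k, w k ≠ 0)
    {x : E} (hx : adjoint T x = 0) : x = (inner 𝕜 (e 0) x : 𝕜) • e 0 := by
  refine e.ext_inner fun i => ?_
  rw [inner_smul_right, orthonormal_iff_ite.mp e.orthonormal]
  cases i with
  | zero => simp
  | succ k =>
    have h : (inner 𝕜 (T (e k)) x : 𝕜) = 0 := by
      rw [← adjoint_inner_right, hx, inner_zero_right]
    rw [hT, inner_smul_left, mul_eq_zero, map_eq_zero] at h
    simpa using h.resolve_left (hw k)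

theorem inner_basis_pow_succ_apply (hT : IsWeightedShift e w T) (m : ℕ) (y : E) :
    (inner 𝕜 (e m) ((T ^ (m + 1)) y) : 𝕜) = 0 := by
  induction m generalizing y with
  | zero => simpa using hT.inner_basis_zero_apply y
  | succ m ih => rw [pow_succ', mul_apply_eq_comp, hT.inner_basis_succ_apply, ih, mul_zero]

end Complete

end IsWeightedShift

/-- The Bergman shift is a near-isometry.  We model the Bergman space abstractly:
`B` is a complex Hilbert space with orthonormal basis `e n` (corresponding to the
normalized monomials `√(n+1) zⁿ`), and `Mz` is the bounded operator of
multiplication by `z`, which acts on the basis by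
`Mz (√(n+1) zⁿ) = √((n+1)/(n+2)) · √(n+2) zⁿ⁺¹`.  Then `Mz` is a bounded-below
contraction and `Mzⁿ(ker Mz*) ⊥ Mzⁿ⁺¹ B` for every `n ≥ 0`. -/
theorem stmt2 {B : Type*} [NormedAddCommGroup B] [InnerProductSpace ℂ B] [CompleteSpace B]
    (e : HilbertBasis ℕ ℂ B) (Mz : B →L[ℂ] B)
    (hMz : ∀ n : ℕ, Mz (e n) = ((Real.sqrt (((n : ℝ) + 1) / ((n : ℝ) + 2)) : ℝ) : ℂ) • e (n + 1)) :
    (∃ δ > (0 : ℝ), ∀ f : B, δ * ‖f‖ ≤ ‖Mz f‖ ∧ ‖Mz f‖ ≤ ‖f‖) ∧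
    (∀ n : ℕ, ∀ x ∈ LinearMap.ker ((adjoint Mz : B →L[ℂ] B) : B →ₗ[ℂ] B), ∀ y : B,
      (inner ℂ ((Mz ^ n) x) ((Mz ^ (n + 1)) y) : ℂ) = 0) := by
  set w : ℕ → ℂ := fun n => ((Real.sqrt (((n : ℝ) + 1) / ((n : ℝ) + 2)) : ℝ) : ℂ)
  have hT : IsWeightedShift e w Mz := hMz
  have hw_norm (n : ℕ) : ‖w n‖ = Real.sqrt (((n : ℝ) + 1) / ((n : ℝ) + 2)) := by
    simp only [w, Complex.norm_real, Real.norm_eq_abs, abs_of_nonneg (Real.sqrt_nonneg _)]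
  have hw_le (n : ℕ) : ‖w n‖ ≤ 1 := by
    rw [hw_norm, Real.sqrt_le_one, div_le_one (by positivity)]
    linarith
  have hw_ge (n : ℕ) : 1 / 2 ≤ ‖w n‖ := by
    rw [hw_norm, Real.le_sqrt (by norm_num) (by positivity), le_div_iff₀ (by positivity)]
    linarith [(n.cast_nonneg : (0 : ℝ) ≤ n)]
  have hw_ne (n : ℕ) : w n ≠ 0 := norm_pos_iff.mp (one_half_pos.trans_le (hw_ge n))
  refine ⟨⟨1 / 2, one_half_pos, fun f =>
    ⟨hT.le_norm_apply one_half_pos.le hw_ge f, by simpa using hT.norm_apply_le hw_le f⟩⟩, ?_⟩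
  intro n x hx y
  rw [hT.eq_smul_of_adjoint_apply_eq_zero hw_ne hx, map_smul, hT.pow_apply_zero, smul_smul,
    inner_smul_left, hT.inner_basis_pow_succ_apply, mul_zero]
end
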